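/- arXiv:1812.08732 — 2 statements merged into one kernel-verified Lean document; each statement's English description precedes it below -/
import Mathlib

section
/- Let G be a nonempty set with binary relations H and V such that (a) every x ∈ G has some y with H x y and some y with V x y, and (b) H is complete over V, i.e., for all x, y, z, t: H x y ∧ V x t ∧ V y z → H t z. Then there exists a function h : ℕ × ℕ → G such that for all i, j ∈ ℕ we have H (h(i,j)) (h(i+1,j)) and V (h(i,j)) (h(i,j+1)). In other words, the standard grid homomorphically embeds into (G, H, V). -/
theorem stmt_7 {G : Type*} [Nonempty G] (H V : G → G → Prop)
    (h1 : ∀ x : G, (∃ y, H x y) ∧ (∃ y, V x y))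
    (h2 : ∀ x y z t : G, H x y → V x t → V y z → H t z) :
    ∃ h : ℕ × ℕ → G, ∀ i j : ℕ,
      H (h (i, j)) (h (i + 1, j)) ∧ V (h (i, j)) (h (i, j + 1)) := by
  obtain ⟨hs, hH⟩ : ∃ f : G → G, ∀ x, H x (f x) := ⟨fun x => (h1 x).1.choose, fun x => (h1 x).1.choose_spec⟩
  obtain ⟨vs, hV⟩ : ∃ f : G → G, ∀ x, V x (f x) := ⟨fun x => (h1 x).2.choose, fun x => (h1 x).2.choose_spec⟩
  set f : ℕ → G := fun i => hs^[i] Classical.ofNonempty with hf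
  refine ⟨fun p => vs^[p.2] (f p.1), fun i j => ⟨?_, ?_⟩⟩
  · induction j with
    | zero => simpa [hf, Function.iterate_succ_apply'] using hH (hs^[i] Classical.ofNonempty)
    | succ j ih =>
        simp only [Function.iterate_succ_apply']
        exact h2 _ _ _ _ ih (hV _) (hV _)
  · simp [Function.iterate_succ_apply']
    exact hV _
end

section
/- Let G be a set equipped with two linear orders <₁ and <₂ and binary relations H, V and a 4-ary relation N satisfying: (1) every x has some y with H x y and some y with V x y; (2) H x y implies y covers x in <₁; (3) V x y implies y covers x in <₂; (4) every x has y, z, t with N x y z t; (5) N x y z t implies: y covers x in <₁, t covers x in <₂, z covers y in <₂, and z covers t in <₁. Then H is complete over V: for all a, b, c, d, if H a b, V a c, and V b d, then H c d. -/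
/-- `y` covers `x` with respect to a strict order `lt`:
`lt x y` and no element lies strictly between them. -/
def Covers {G : Type*} (lt : G → G → Prop) (x y : G) : Prop :=
  lt x y ∧ ∀ z : G, ¬ (lt x z ∧ lt z y)

lemma covers_unique {G : Type*} (lt : G → G → Prop)
    (h : IsStrictTotalOrder G lt) {x y y' : G}
    (h1 : Covers lt x y) (h2 : Covers lt x y') : y = y' := by
  rcases (show lt y y' ∨ y = y' ∨ lt y' y by have := h.trichotomous y y'; tauto) with hy | hy | hy
  · exact absurd ⟨h1.1, hy⟩ (h2.2 y)
  · exact hy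
  · exact absurd ⟨h2.1, hy⟩ (h1.2 y')

theorem stmt_9 {G : Type*} (lt1 lt2 : G → G → Prop)
    (h1 : IsStrictTotalOrder G lt1) (h2 : IsStrictTotalOrder G lt2)
    (H V : G → G → Prop) (N : G → G → G → G → Prop)
    (ax1 : ∀ x : G, (∃ y, H x y) ∧ (∃ y, V x y))
    (axH : ∀ x y : G, H x y → Covers lt1 x y)
    (axV : ∀ x y : G, V x y → Covers lt2 x y)
    (axN1 : ∀ x : G, ∃ y z t, N x y z t)
    (axN2 : ∀ x y z t : G, N x y z t →
      Covers lt1 x y ∧ Covers lt2 x t ∧ Covers lt2 y z ∧ Covers lt1 t z) :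
    ∀ a b c d : G, H a b → V a c → V b d → H c d := by
  intro a b c d hab vac vbd
  obtain ⟨y, z, t, hN⟩ := axN1 a
  obtain ⟨cy, ct, cz, ctz⟩ := axN2 a y z t hN
  have hyb : y = b := covers_unique lt1 h1 cy (axH a b hab)
  have htc : t = c := covers_unique lt2 h2 ct (axV a c vac)
  rw [hyb] at cz; rw [htc] at ctz
  have hzd : z = d := covers_unique lt2 h2 cz (axV b d vbd)
  rw [hzd] at ctz
  obtain ⟨e, he⟩ := (ax1 c).1
  have : e = d := covers_unique lt1 h1 (axH c e he) ctz
  rw [this] at he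
  exact he
end
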